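/- In the weighted two-way fixed effects regression min over (μ_i)_{i=0}^N, (α_t)_{t=1}^S of ∑ over (i,t) with (i,t) ≠ (0,S), i ∈ {0,…,N}, t ∈ {1,…,S}, of w_i (y_{it} − μ_i − α_t)² with weights w_0 = 1, w_i ≥ 0, ∑_{i=1}^N w_i = 1 and S ≥ 2, any minimizer satisfies μ_0 + α_S = (1/(S−1)) ∑_{t=1}^{S−1} y_{0t} + ∑_{i=1}^N w_i ( y_{iS} − (1/(S−1)) ∑_{t=1}^{S−1} y_{it} ). -/

import Mathlib

open Finset

/-- Weighted two-way fixed effects objective: times are `0, …, S-1` (so the paper's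
time `S` is index `S-1`), and the cell `(0, S-1)` is excluded. -/
noncomputable def twfeObjective (N S : ℕ) (w : ℕ → ℝ) (y : ℕ → ℕ → ℝ)
    (μ α : ℕ → ℝ) : ℝ :=
  ∑ i ∈ range (N + 1), ∑ t ∈ range S,
    if i = 0 ∧ t = S - 1 then 0 else w i * (y i t - μ i - α t) ^ 2

/-! Moving a minimizer to `μ + ε u`, `α + ε v` changes the objective by a quadratic in `ε` whose
linear coefficient must therefore vanish. This gives the normal equations: the residuals of
unit `0` sum to zero over the pre-periods, the weighted residuals of each control unit sum to
zero over all periods, and the weighted control residuals of the last period sum to zero.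
Averaging over the pre-periods and using `∑ wᵢ = 1`, the mean pre-period time effect cancels
between unit `0` and the controls, which leaves the forecast formula. -/

theorem sum_mul_mul_eq_zero_of_forall_le {ι : Type*} (s : Finset ι) (c r d : ι → ℝ)
    (hmin : ∀ ε : ℝ, ∑ k ∈ s, c k * r k ^ 2 ≤ ∑ k ∈ s, c k * (r k - ε * d k) ^ 2) :
    ∑ k ∈ s, c k * r k * d k = 0 := by
  have hquad : ∀ ε : ℝ,
      0 ≤ (∑ k ∈ s, c k * d k ^ 2) * (ε * ε) + (-2 * ∑ k ∈ s, c k * r k * d k) * ε + 0 := by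
    intro ε
    have hexpand : ∑ k ∈ s, c k * (r k - ε * d k) ^ 2 - ∑ k ∈ s, c k * r k ^ 2 =
        (∑ k ∈ s, c k * d k ^ 2) * (ε * ε) + (-2 * ∑ k ∈ s, c k * r k * d k) * ε + 0 := by
      simp only [← sum_sub_distrib, sum_mul, mul_sum, ← sum_add_distrib, add_zero]
      exact sum_congr rfl fun k _ ↦ by ring
    linarith [hmin ε]
  have hdisc := discrim_le_zero hquad
  rw [discrim, mul_zero, sub_zero] at hdisc
  have hlinear := pow_eq_zero_iff two_ne_zero |>.mp (le_antisymm hdisc (sq_nonneg _))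
  linarith

theorem range_add_one_eq_insert_Icc_one (n : ℕ) : range (n + 1) = insert 0 (Icc 1 n) := by
  rw [Nat.range_succ_eq_Icc_zero]
  exact (insert_Icc_add_one_left_eq_Icc n.zero_le).symm

theorem sum_range_add_one_eq_add_sum_Icc_one {M : Type*} [AddCommMonoid M] (n : ℕ) (f : ℕ → M) :
    ∑ i ∈ range (n + 1), f i = f 0 + ∑ i ∈ Icc 1 n, f i := by
  rw [range_add_one_eq_insert_Icc_one, sum_insert (by simp)]

theorem forecast_eq_of_normal_equations {m : ℕ} (hm : m ≠ 0) {s : Finset ℕ} {w : ℕ → ℝ}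
    (hws : ∑ i ∈ s, w i = 1) {y : ℕ → ℕ → ℝ} {μ α : ℕ → ℝ}
    (hunit : ∑ t ∈ range m, (y 0 t - μ 0 - α t) = 0)
    (hpre : ∑ i ∈ s, w i * ∑ t ∈ range m, (y i t - μ i - α t) = 0)
    (hpost : ∑ i ∈ s, w i * (y i m - μ i - α m) = 0) :
    μ 0 + α m = (1 / (m : ℝ)) * ∑ t ∈ range m, y 0 t +
      ∑ i ∈ s, w i * (y i m - (1 / (m : ℝ)) * ∑ t ∈ range m, y i t) := by
  simp only [sum_sub_distrib, sum_const, card_range, nsmul_eq_mul, mul_sub,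
    mul_left_comm (w _) (m : ℝ), mul_left_comm (w _) (1 / (m : ℝ)), ← mul_sum, ← sum_mul, hws,
    one_mul] at hunit hpre hpost ⊢
  field_simp
  linear_combination hpre - hunit - (m : ℝ) * hpost

section TWFE

variable {N S m : ℕ} {w : ℕ → ℝ} {y : ℕ → ℕ → ℝ} {μ α : ℕ → ℝ}

def twfeWeight (S : ℕ) (w : ℕ → ℝ) (i t : ℕ) : ℝ :=
  if i = 0 ∧ t = S - 1 then 0 else w i

theorem twfeObjective_eq_sum_product :
    twfeObjective N S w y μ α = ∑ p ∈ range (N + 1) ×ˢ range S,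
      twfeWeight S w p.1 p.2 * (y p.1 p.2 - μ p.1 - α p.2) ^ 2 := by
  rw [twfeObjective, sum_product]
  refine sum_congr rfl fun i _ ↦ sum_congr rfl fun t _ ↦ ?_
  rw [twfeWeight, ite_mul, zero_mul]

theorem twfe_normal_equation
    (hmin : ∀ μ' α' : ℕ → ℝ, twfeObjective N S w y μ α ≤ twfeObjective N S w y μ' α')
    (u v : ℕ → ℝ) :
    ∑ i ∈ range (N + 1), ∑ t ∈ range S,
      twfeWeight S w i t * (y i t - μ i - α t) * (u i + v t) = 0 := by
  rw [← sum_product (f := fun p : ℕ × ℕ ↦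
    twfeWeight S w p.1 p.2 * (y p.1 p.2 - μ p.1 - α p.2) * (u p.1 + v p.2))]
  refine sum_mul_mul_eq_zero_of_forall_le _ _ _ _ fun ε ↦ ?_
  convert hmin (μ + ε • u) (α + ε • v) using 1 <;> rw [twfeObjective_eq_sum_product]
  refine sum_congr rfl fun p _ ↦ ?_
  simp only [Pi.add_apply, Pi.smul_apply, smul_eq_mul]
  ring

theorem twfe_normal_equation_unit
    (hmin : ∀ μ' α' : ℕ → ℝ, twfeObjective N S w y μ α ≤ twfeObjective N S w y μ' α')
    {j : ℕ} (hj : j ≤ N) :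
    ∑ t ∈ range S, twfeWeight S w j t * (y j t - μ j - α t) = 0 := by
  have := twfe_normal_equation hmin (fun i ↦ if i = j then 1 else 0) 0
  simpa [hj, Nat.lt_succ_iff] using this

theorem twfe_normal_equation_time
    (hmin : ∀ μ' α' : ℕ → ℝ, twfeObjective N S w y μ α ≤ twfeObjective N S w y μ' α')
    {s : ℕ} (hs : s < S) :
    ∑ i ∈ range (N + 1), twfeWeight S w i s * (y i s - μ i - α s) = 0 := by
  have := twfe_normal_equation hmin 0 (fun t ↦ if t = s then 1 else 0)
  simpa [hs] using this

theorem twfe_normal_equation_unit_zero (hw0 : w 0 = 1)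
    (hmin : ∀ μ' α' : ℕ → ℝ,
      twfeObjective N (m + 1) w y μ α ≤ twfeObjective N (m + 1) w y μ' α') :
    ∑ t ∈ range m, (y 0 t - μ 0 - α t) = 0 := by
  have h := twfe_normal_equation_unit hmin N.zero_le
  rw [sum_range_succ, twfeWeight, if_pos ⟨rfl, rfl⟩, zero_mul, add_zero] at h
  rw [← h]
  refine sum_congr rfl fun t ht ↦ ?_
  rw [twfeWeight, if_neg (by simpa using (mem_range.mp ht).ne), hw0, one_mul]

theorem twfe_normal_equation_controls_last_period
    (hmin : ∀ μ' α' : ℕ → ℝ,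
      twfeObjective N (m + 1) w y μ α ≤ twfeObjective N (m + 1) w y μ' α') :
    ∑ i ∈ Icc 1 N, w i * (y i m - μ i - α m) = 0 := by
  have h := twfe_normal_equation_time hmin m.lt_succ_self
  rw [sum_range_add_one_eq_add_sum_Icc_one, twfeWeight, if_pos ⟨rfl, rfl⟩, zero_mul,
    zero_add] at h
  rw [← h]
  refine sum_congr rfl fun i hi ↦ ?_
  rw [twfeWeight, if_neg fun h ↦ by simp [h.1] at hi]

theorem twfe_normal_equation_controls_pre_period
    (hmin : ∀ μ' α' : ℕ → ℝ,
      twfeObjective N (m + 1) w y μ α ≤ twfeObjective N (m + 1) w y μ' α') :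
    ∑ i ∈ Icc 1 N, w i * ∑ t ∈ range m, (y i t - μ i - α t) = 0 := by
  have hunit : ∀ i ∈ Icc 1 N,
      w i * ∑ t ∈ range m, (y i t - μ i - α t) + w i * (y i m - μ i - α m) = 0 := by
    intro i hi
    have hi0 : i ≠ 0 := by simp at hi; omega
    have h := twfe_normal_equation_unit hmin (mem_Icc.mp hi).2
    simpa only [twfeWeight, hi0, false_and, if_false, sum_range_succ, ← mul_sum, mul_add] using h
  have h := sum_congr rfl hunit
  rwa [sum_add_distrib, twfe_normal_equation_controls_last_period hmin, add_zero,
    sum_const_zero] at h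

end TWFE

theorem twfe_forecast_characterization_general (N S : ℕ) (hS : 2 ≤ S)
    (w : ℕ → ℝ) (hw0 : w 0 = 1)
    (hws : ∑ i ∈ Icc 1 N, w i = 1)
    (y : ℕ → ℕ → ℝ) (μ α : ℕ → ℝ)
    (hmin : ∀ μ' α' : ℕ → ℝ,
      twfeObjective N S w y μ α ≤ twfeObjective N S w y μ' α') :
    μ 0 + α (S - 1) =
      (1 / ((S : ℝ) - 1)) * ∑ t ∈ range (S - 1), y 0 t +
        ∑ i ∈ Icc 1 N, w i *
          (y i (S - 1) - (1 / ((S : ℝ) - 1)) * ∑ t ∈ range (S - 1), y i t) := by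
  obtain ⟨m, rfl⟩ : ∃ m, S = m + 1 := ⟨S - 1, by omega⟩
  rw [Nat.add_sub_cancel, Nat.cast_succ, add_sub_cancel_right]
  exact forecast_eq_of_normal_equations (by omega) hws
    (twfe_normal_equation_unit_zero hw0 hmin) (twfe_normal_equation_controls_pre_period hmin)
    (twfe_normal_equation_controls_last_period hmin)

theorem twfe_forecast_characterization (N S : ℕ) (hS : 2 ≤ S)
    (w : ℕ → ℝ) (hw0 : w 0 = 1) (hwn : ∀ i, 0 ≤ w i)
    (hws : ∑ i ∈ Icc 1 N, w i = 1)
    (y : ℕ → ℕ → ℝ) (μ α : ℕ → ℝ)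
    (hmin : ∀ μ' α' : ℕ → ℝ,
      twfeObjective N S w y μ α ≤ twfeObjective N S w y μ' α') :
    μ 0 + α (S - 1) =
      (1 / ((S : ℝ) - 1)) * ∑ t ∈ range (S - 1), y 0 t +
        ∑ i ∈ Icc 1 N, w i *
          (y i (S - 1) - (1 / ((S : ℝ) - 1)) * ∑ t ∈ range (S - 1), y i t) :=
  twfe_forecast_characterization_general N S hS w hw0 hws y μ α hmin
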